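/- arXiv:2208.13438 — 5 statements merged into one kernel-verified Lean document; each statement's English description precedes it below -/
import Mathlib

section
/- Let W be a finite-dimensional real inner product space, θ : W → W self-adjoint, and suppose the sum of any k eigenvalues of θ (counted with multiplicity) is positive. Then for every orthonormal set {w₁,…,w_k} in W, the sum ⟨θ(w₁),w₁⟩ + ⋯ + ⟨θ(w_k),w_k⟩ is positive. -/
open scoped RealInnerProductSpace

/-- If every sum of `k` eigenvalues (with multiplicity) of a self-adjoint endomorphism `θ`
is positive, then `Σᵢ ⟪θ wᵢ, wᵢ⟫ > 0` for every orthonormal `k`-tuple `(w₁,…,w_k)`. -/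
theorem k_positive_of_eigenvalue_sums {W : Type*} [NormedAddCommGroup W]
    [InnerProductSpace ℝ W] [FiniteDimensional ℝ W] {n : ℕ}
    (hn : Module.finrank ℝ W = n) {θ : W →ₗ[ℝ] W} (hθ : θ.IsSymmetric)
    (k : ℕ) (hk1 : 1 ≤ k) (hk2 : k ≤ n)
    (heig : ∀ s : Fin k → Fin n, Function.Injective s →
      0 < ∑ i, hθ.eigenvalues hn (s i)) :
    ∀ w : Fin k → W, Orthonormal ℝ w → 0 < ∑ i, ⟪θ (w i), w i⟫ := by
  intro w hw
  set lam := hθ.eigenvalues hn with hlam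
  set b := hθ.eigenvectorBasis hn with hb
  set t : Fin n → ℝ := fun j => ∑ i, ⟪b j, w i⟫ ^ 2 with ht
  -- each t j ∈ [0,1]
  have ht0 : ∀ j, 0 ≤ t j := fun j => Finset.sum_nonneg fun i _ => sq_nonneg _
  have ht1 : ∀ j, t j ≤ 1 := by
    intro j
    have := hw.sum_inner_products_le (b j) (s := Finset.univ)
    simpa [ht, real_inner_comm, sq_abs, b.orthonormal.1 j] using this
  -- Σ t j = k
  have hpar : ∀ i : Fin k, ∑ j, ⟪b j, w i⟫ ^ 2 = 1 := by
    intro i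
    have hsum := b.sum_inner_mul_inner (w i) (w i)
    have h1 : ⟪w i, w i⟫ = (1 : ℝ) := by
      rw [real_inner_self_eq_norm_sq, hw.1 i]; norm_num
    rw [h1] at hsum
    calc ∑ j, ⟪b j, w i⟫ ^ 2 = ∑ j, ⟪w i, b j⟫ * ⟪b j, w i⟫ := by
          refine Finset.sum_congr rfl fun j _ => ?_
          rw [sq, real_inner_comm (b j) (w i)]
      _ = 1 := hsum
  have htk : ∑ j, t j = (k : ℝ) := by
    simp only [ht]
    rw [Finset.sum_comm, Finset.sum_congr rfl fun i _ => hpar i]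
    simp
  -- Rayleigh sum as Σ λ_j t_j
  have hray : ∑ i, ⟪θ (w i), w i⟫ = ∑ j, lam j * t j := by
    have hterm : ∀ i : Fin k, ⟪θ (w i), w i⟫ = ∑ j, lam j * ⟪b j, w i⟫ ^ 2 := by
      intro i
      have := b.sum_inner_mul_inner (θ (w i)) (w i)
      rw [← this]
      refine Finset.sum_congr rfl fun j _ => ?_
      have : ⟪θ (w i), b j⟫ = lam j * ⟪b j, w i⟫ := by
        rw [hθ (w i) (b j)]
        rw [hb, hθ.apply_eigenvectorBasis hn j]
        simp [real_inner_smul_right, real_inner_comm, hlam]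
      rw [this]; ring
    simp only [hterm]
    rw [Finset.sum_comm]
    simp [ht, Finset.mul_sum]
  rw [hray]
  -- sorting permutation
  set σ := Tuple.sort lam with hσ
  have hmono : Monotone (lam ∘ σ) := Tuple.monotone_sort lam
  set s : Fin k → Fin n := fun i => σ (Fin.castLE hk2 i) with hs
  have hsinj : Function.Injective s := fun a b hab => by
    have := σ.injective hab
    exact Fin.castLE_injective hk2 this
  set S : Finset (Fin n) := Finset.image s Finset.univ with hS
  have hScard : S.card = k := by
    rw [hS, Finset.card_image_of_injective _ hsinj, Finset.card_univ, Fintype.card_fin]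
  -- threshold
  have hk1' : k - 1 < n := by omega
  set p : Fin n := ⟨k - 1, hk1'⟩ with hp
  set μ := lam (σ p) with hμ
  have hμS : ∀ j ∈ S, lam j ≤ μ := by
    intro j hj
    rw [hS, Finset.mem_image] at hj
    obtain ⟨i, _, rfl⟩ := hj
    exact hmono (by simp [hp, Fin.le_def]; omega)
  have hμSc : ∀ j ∉ S, μ ≤ lam j := by
    intro j hj
    have hj' : j = σ (σ.symm j) := (σ.apply_symm_apply j).symm
    have hge : p ≤ σ.symm j := by
      by_contra h
      push_neg at h
      apply hj
      rw [hS, Finset.mem_image]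
      have hlt' : (σ.symm j : ℕ) < k := by
        rw [Fin.lt_def] at h; simp [hp] at h; omega
      refine ⟨⟨(σ.symm j : ℕ), hlt'⟩, Finset.mem_univ _, ?_⟩
      show σ (Fin.castLE hk2 ⟨(σ.symm j : ℕ), hlt'⟩) = j
      conv_rhs => rw [hj']
      exact congrArg σ (Fin.ext rfl)
    calc μ = (lam ∘ σ) p := rfl
      _ ≤ (lam ∘ σ) (σ.symm j) := hmono hge
      _ = lam j := by simp
  -- positivity of Σ_{j∈S} λ_j
  have hpos : 0 < ∑ j ∈ S, lam j := by
    have := heig s hsinj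
    rwa [hS, Finset.sum_image (fun a _ c _ h => hsinj h)]
  -- key inequality
  have h1 : 0 ≤ ∑ j ∈ S, (lam j - μ) * (t j - 1) :=
    Finset.sum_nonneg fun j hj =>
      by nlinarith [hμS j hj, ht1 j]
  have h2 : 0 ≤ ∑ j ∈ Sᶜ, (lam j - μ) * t j :=
    Finset.sum_nonneg fun j hj =>
      mul_nonneg (by linarith [hμSc j (Finset.mem_compl.mp hj)]) (ht0 j)
  have hsplit : ∀ f : Fin n → ℝ, ∑ j ∈ S, f j + ∑ j ∈ Sᶜ, f j = ∑ j, f j :=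
    fun f => Finset.sum_add_sum_compl S f
  have e1 : ∑ j ∈ S, (lam j - μ) * (t j - 1)
      = ∑ j ∈ S, lam j * t j - ∑ j ∈ S, lam j - μ * ∑ j ∈ S, t j + μ * k := by
    have : ∀ j, (lam j - μ) * (t j - 1) = lam j * t j - lam j - μ * t j + μ := by
      intro j; ring
    simp only [this, Finset.sum_add_distrib, Finset.sum_sub_distrib, Finset.sum_const,
      nsmul_eq_mul, ← Finset.mul_sum, hScard]
    ring
  have e2 : ∑ j ∈ Sᶜ, (lam j - μ) * t j
      = ∑ j ∈ Sᶜ, lam j * t j - μ * ∑ j ∈ Sᶜ, t j := by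
    simp only [sub_mul, Finset.sum_sub_distrib, ← Finset.mul_sum]
  have hts : ∑ j ∈ S, t j + ∑ j ∈ Sᶜ, t j = (k : ℝ) := by rw [hsplit, htk]
  have hlt : ∑ j ∈ S, lam j * t j + ∑ j ∈ Sᶜ, lam j * t j = ∑ j, lam j * t j :=
    hsplit _
  have hμt : μ * ∑ j ∈ S, t j + μ * ∑ j ∈ Sᶜ, t j = μ * k := by
    rw [← mul_add, hts]
  linarith
end

section
/- Let V be a finite-dimensional real inner product space, A : Λ²V → Λ²V self-adjoint, v ∈ V a unit vector, and A_v : V → V defined by ⟨A_v(x),y⟩ = ⟨A(v∧x),v∧y⟩. Then the following are equivalent: (1) for every orthonormal set {v₁,…,v_k} ⊂ v^⊥ one has Σᵢ ⟨A(v∧vᵢ), v∧vᵢ⟩ > 0; (2) the restriction A_v|_{v^⊥} : v^⊥ → v^⊥ is k-positive; (3) A_v : V → V is (k+1)-positive. -/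
open scoped RealInnerProductSpace
open Finset

private lemma euclid_parseval' {n : ℕ} (B : OrthonormalBasis (Fin n) ℝ (EuclideanSpace ℝ (Fin n)))
    (p q : Fin n) : ∑ i, B i p * B i q = if p = q then (1:ℝ) else 0 := by
  have h := B.sum_inner_mul_inner (EuclideanSpace.single p (1:ℝ)) (EuclideanSpace.single q (1:ℝ))
  simp [EuclideanSpace.inner_single_left, EuclideanSpace.inner_single_right,
    EuclideanSpace.single_apply] at h
  rw [h]
  by_cases hpq : p = q <;> simp [hpq, eq_comm]

section helpers
variable {V : Type*} [NormedAddCommGroup V] [InnerProductSpace ℝ V]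

private lemma euclid_rows' {n : ℕ} (B : OrthonormalBasis (Fin n) ℝ (EuclideanSpace ℝ (Fin n)))
    (i i' : Fin n) : ∑ j, B i j * B i' j = if i = i' then (1:ℝ) else 0 := by
  have hBi : ⟪(B i : EuclideanSpace ℝ (Fin n)), B i'⟫ = if i = i' then (1:ℝ) else 0 :=
    (orthonormal_iff_ite.mp B.orthonormal) i i'
  rw [PiLp.inner_apply] at hBi
  simp [RCLike.inner_apply, starRingEnd_apply] at hBi
  rw [← hBi]
  exact Finset.sum_congr rfl (fun j _ => mul_comm _ _)

private lemma rotate_inner' {n : ℕ} {u : Fin n → V} (hu : Orthonormal ℝ u)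
    (B : OrthonormalBasis (Fin n) ℝ (EuclideanSpace ℝ (Fin n))) (i i' : Fin n) :
    ⟪∑ j, B i j • u j, ∑ j, B i' j • u j⟫ = if i = i' then 1 else 0 := by
  rw [orthonormal_iff_ite] at hu
  have hBi : ⟪(B i : EuclideanSpace ℝ (Fin n)), B i'⟫ = if i = i' then (1:ℝ) else 0 :=
    (orthonormal_iff_ite.mp B.orthonormal) i i'
  rw [PiLp.inner_apply] at hBi
  simp only [RCLike.inner_apply, starRingEnd_apply, star_trivial] at hBi
  rw [← hBi, sum_inner]
  simp only [inner_sum, real_inner_smul_left, real_inner_smul_right, hu, mul_ite, mul_one,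
    mul_zero]
  simp [Finset.sum_ite_eq, mul_comm]

private lemma rotate_orthonormal' {n : ℕ} {u : Fin n → V} (hu : Orthonormal ℝ u)
    (B : OrthonormalBasis (Fin n) ℝ (EuclideanSpace ℝ (Fin n))) :
    Orthonormal ℝ (fun i => ∑ j, B i j • u j) := by
  rw [orthonormal_iff_ite]
  exact fun i j => rotate_inner' hu B i j

private lemma rotate_sum' {n : ℕ} (u : Fin n → V)
    (B : OrthonormalBasis (Fin n) ℝ (EuclideanSpace ℝ (Fin n))) (T : V →ₗ[ℝ] V) :
    ∑ i, ⟪T (∑ j, B i j • u j), ∑ j, B i j • u j⟫ = ∑ i, ⟪T (u i), u i⟫ := by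
  have key : ∀ i, ⟪T (∑ j, B i j • u j), ∑ j, B i j • u j⟫
      = ∑ p, ∑ q, (B i p * B i q) * ⟪T (u p), u q⟫ := by
    intro i
    rw [map_sum, sum_inner]
    congr 1; funext p
    rw [map_smul, real_inner_smul_left, inner_sum, Finset.mul_sum]
    congr 1; funext q
    rw [real_inner_smul_right]; ring
  calc ∑ i, ⟪T (∑ j, B i j • u j), ∑ j, B i j • u j⟫
      = ∑ p, ∑ q, (∑ i, B i p * B i q) * ⟪T (u p), u q⟫ := by
        simp only [key]
        rw [Finset.sum_comm]
        congr 1; funext p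
        rw [Finset.sum_comm]
        congr 1; funext q
        rw [Finset.sum_mul]
    _ = ∑ i, ⟪T (u i), u i⟫ := by
        simp only [euclid_parseval' B, ite_mul, one_mul, zero_mul]
        simp [Finset.sum_ite_eq']

private lemma rotate_inner_fixed' {n : ℕ} (u : Fin n → V)
    (B : OrthonormalBasis (Fin n) ℝ (EuclideanSpace ℝ (Fin n))) (i : Fin n) (x : V) :
    ⟪∑ j, B i j • u j, x⟫ = ∑ j, B i j * ⟪u j, x⟫ := by
  rw [sum_inner]; simp [real_inner_smul_left]

private lemma cons_orthonormal' (v : V) (hv : ‖v‖ = 1) {k : ℕ} {w : Fin k → V}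
    (hw : Orthonormal ℝ w) (hwv : ∀ i, ⟪w i, v⟫ = 0) :
    Orthonormal ℝ (Fin.cons v w : Fin (k+1) → V) := by
  rw [orthonormal_iff_ite] at hw ⊢
  intro i j
  induction i using Fin.cases with
  | zero =>
    induction j using Fin.cases with
    | zero => simp [real_inner_self_eq_norm_sq, hv]
    | succ j' =>
      rw [Fin.cons_zero, Fin.cons_succ, if_neg (Fin.succ_ne_zero j').symm, real_inner_comm]
      exact hwv j'
  | succ i' =>
    induction j using Fin.cases with
    | zero => simp [hwv, Fin.succ_ne_zero]
    | succ j' => simpa [Fin.succ_inj] using hw i' j'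

end helpers

set_option maxHeartbeats 1600000 in
/-- Lemma 2.7: for a self-adjoint `A` on `Λ²V` (encoded via a wedge map) and a unit
vector `v`, the following are equivalent: (1) `A` is positive on every `k`-chain with
base `v`; (2) `A_v` restricted to `v^⊥` is `k`-positive; (3) `A_v` is `(k+1)`-positive. -/
theorem k_chain_positivity_tfae {V W : Type*}
    [NormedAddCommGroup V] [InnerProductSpace ℝ V] [FiniteDimensional ℝ V]
    [NormedAddCommGroup W] [InnerProductSpace ℝ W]
    (wedge : V →ₗ[ℝ] V →ₗ[ℝ] W)
    (hinner : ∀ a b c d : V, ⟪wedge a b, wedge c d⟫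
      = ⟪a, c⟫ * ⟪b, d⟫ - ⟪a, d⟫ * ⟪b, c⟫)
    (hspan : Submodule.span ℝ {x : W | ∃ a b : V, wedge a b = x} = ⊤)
    (A : W →ₗ[ℝ] W) (hA : A.IsSymmetric)
    (v : V) (hv : ‖v‖ = 1)
    (Av : V →ₗ[ℝ] V)
    (hAv : ∀ x y : V, ⟪Av x, y⟫ = ⟪A (wedge v x), wedge v y⟫)
    (k : ℕ) (hk1 : 1 ≤ k) (hk2 : k ≤ Module.finrank ℝ V - 1) :
    ((∀ w : Fin k → V, Orthonormal ℝ w → (∀ i, ⟪w i, v⟫ = 0) →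
        0 < ∑ i, ⟪A (wedge v (w i)), wedge v (w i)⟫)
      ↔ (∀ w : Fin k → V, Orthonormal ℝ w → (∀ i, ⟪w i, v⟫ = 0) →
        0 < ∑ i, ⟪Av (w i), w i⟫))
    ∧ ((∀ w : Fin k → V, Orthonormal ℝ w → (∀ i, ⟪w i, v⟫ = 0) →
        0 < ∑ i, ⟪Av (w i), w i⟫)
      ↔ (∀ w : Fin (k+1) → V, Orthonormal ℝ w →
        0 < ∑ i, ⟪Av (w i), w i⟫)) := by
  have hvv : ⟪v, v⟫ = (1:ℝ) := by
    rw [real_inner_self_eq_norm_sq, hv]; norm_num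
  have hwvv : wedge v v = 0 := by
    have h0 : ⟪wedge v v, wedge v v⟫ = 0 := by rw [hinner]; ring
    rwa [inner_self_eq_zero] at h0
  have hAvv : Av v = 0 := by
    have h0 : ⟪Av v, Av v⟫ = 0 := by
      rw [hAv, hwvv, map_zero, inner_zero_left]
    rwa [inner_self_eq_zero] at h0
  have hAvv' : ∀ x, ⟪Av x, v⟫ = 0 := by
    intro x; rw [hAv, hwvv, inner_zero_right]
  constructor
  · constructor
    · intro h w hw hwv
      simp_rw [hAv]
      exact h w hw hwv
    · intro h w hw hwv
      have := h w hw hwv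
      simp_rw [hAv] at this
      exact this
  constructor
  · -- hard direction
    intro h u hu
    have hkr : (1:ℝ) ≤ (k:ℝ) := by exact_mod_cast hk1
    by_cases hc0 : ∀ i, ⟪u i, v⟫ = 0
    · -- all of u is perpendicular to v : averaging
      have key : ∀ j : Fin (k+1),
          0 < ∑ i : Fin k, ⟪Av (u (j.succAbove i)), u (j.succAbove i)⟫ := by
        intro j
        exact h _ (hu.comp _ (Fin.succAbove_right_injective)) (fun i => hc0 _)
      have hsum : ∀ j : Fin (k+1),
          ∑ i : Fin k, ⟪Av (u (j.succAbove i)), u (j.succAbove i)⟫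
            = (∑ i, ⟪Av (u i), u i⟫) - ⟪Av (u j), u j⟫ := by
        intro j
        rw [Fin.sum_univ_succAbove (fun i => ⟪Av (u i), u i⟫) j]
        ring
      have hpos : 0 < ∑ j : Fin (k+1),
          ((∑ i, ⟪Av (u i), u i⟫) - ⟪Av (u j), u j⟫) :=
        Finset.sum_pos (fun j _ => by rw [← hsum j]; exact key j) Finset.univ_nonempty
      rw [Finset.sum_sub_distrib, Finset.sum_const, card_univ, Fintype.card_fin,
        nsmul_eq_mul] at hpos
      push_cast at hpos
      nlinarith [hpos]
    · push_neg at hc0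
      set c : EuclideanSpace ℝ (Fin (k+1)) := WithLp.toLp 2 (fun i => ⟪u i, v⟫) with hcdef
      have hcne : c ≠ 0 := by
        obtain ⟨i, hi⟩ := hc0
        intro h0
        exact hi (congrArg (fun z : EuclideanSpace ℝ (Fin (k+1)) => z i) h0)
      have hcnorm : 0 < ‖c‖ := norm_pos_iff.mpr hcne
      have hunit : ‖(‖c‖⁻¹ • c : EuclideanSpace ℝ (Fin (k+1)))‖ = 1 := by
        rw [norm_smul, norm_inv, norm_norm, inv_mul_cancel₀ hcnorm.ne']
      obtain ⟨B, hB⟩ := Orthonormal.exists_orthonormalBasis_extension_of_card_eq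
        (𝕜 := ℝ) (E := EuclideanSpace ℝ (Fin (k+1))) (ι := Fin (k+1))
        (by simp) (v := fun _ : Fin (k+1) => (‖c‖⁻¹ • c : EuclideanSpace ℝ (Fin (k+1))))
        (s := {0}) ⟨fun i => hunit, fun i j hij =>
          absurd (Subtype.ext (i.2.trans j.2.symm)) hij⟩
      have hB0 : B 0 = ‖c‖⁻¹ • c := hB 0 rfl
      set w : Fin (k+1) → V := fun i => ∑ j, B i j • u j with hwdef
      have hw : Orthonormal ℝ w := rotate_orthonormal' hu B
      have hsum : ∑ i, ⟪Av (w i), w i⟫ = ∑ i, ⟪Av (u i), u i⟫ := rotate_sum' u B Av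
      have hcj : ∀ j, ⟪u j, v⟫ = ‖c‖ * B 0 j := by
        intro j
        rw [hB0]
        show ⟪u j, v⟫ = ‖c‖ * ((‖c‖⁻¹ • c) j)
        rw [PiLp.smul_apply, smul_eq_mul, ← mul_assoc, mul_inv_cancel₀ hcnorm.ne', one_mul]
      have hwv : ∀ i, ⟪w i, v⟫ = if i = 0 then ‖c‖ else 0 := by
        intro i
        rw [hwdef]
        rw [rotate_inner_fixed']
        calc ∑ j, B i j * ⟪u j, v⟫ = ‖c‖ * ∑ j, B i j * B 0 j := by
              rw [Finset.mul_sum]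
              congr 1; funext j; rw [hcj j]; ring
          _ = ‖c‖ * (if i = 0 then 1 else 0) := by rw [euclid_rows' B i 0]
          _ = if i = 0 then ‖c‖ else 0 := by by_cases hi : i = 0 <;> simp [hi]
      have hwv0 : ⟪w 0, v⟫ = ‖c‖ := by simpa using hwv 0
      have hwvs : ∀ i : Fin k, ⟪w i.succ, v⟫ = 0 := fun i => by
        simpa [Fin.succ_ne_zero] using hwv i.succ
      set x := w 0 - ‖c‖ • v with hxdef
      have hxv : ⟪x, v⟫ = 0 := by
        rw [hxdef, inner_sub_left, real_inner_smul_left, hvv, hwv0]; ring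
      have hxw : ∀ i : Fin k, ⟪x, w i.succ⟫ = 0 := by
        intro i
        have h1 : ⟪w 0, w i.succ⟫ = 0 := by
          simpa [(Fin.succ_ne_zero i).symm] using orthonormal_iff_ite.mp hw 0 i.succ
        have h2 : ⟪v, w i.succ⟫ = 0 := by rw [real_inner_comm]; exact hwvs i
        rw [hxdef, inner_sub_left, real_inner_smul_left, h1, h2]; ring
      have hw0x : w 0 = x + ‖c‖ • v := by rw [hxdef]; abel
      have hAvx : ⟪Av (w 0), w 0⟫ = ⟪Av x, x⟫ := by
        rw [hw0x, map_add, map_smul, hAvv, smul_zero, add_zero, inner_add_right,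
          real_inner_smul_right, hAvv', mul_zero, add_zero]
      have h00 : ⟪w 0, w 0⟫ = 1 := by simpa using orthonormal_iff_ite.mp hw 0 0
      have h2vw : ⟪v, w 0⟫ = ‖c‖ := by rw [real_inner_comm]; exact hwv0
      have hnx : ‖x‖^2 = 1 - ‖c‖^2 := by
        rw [← real_inner_self_eq_norm_sq, hxdef, inner_sub_left, inner_sub_right,
          inner_sub_right, real_inner_smul_left, real_inner_smul_left, real_inner_smul_right,
          real_inner_smul_right, h00, hvv]
        rw [h2vw, hwv0] <;> try rw [h2vw] <;> try rw [hwv0]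
        ring
      have hw' : Orthonormal ℝ (fun i : Fin k => w i.succ) :=
        hw.comp _ (Fin.succ_injective _)
      have hS : 0 < ∑ i : Fin k, ⟪Av (w i.succ), w i.succ⟫ := h _ hw' hwvs
      have htot : ∑ i, ⟪Av (u i), u i⟫
          = ⟪Av x, x⟫ + ∑ i : Fin k, ⟪Av (w i.succ), w i.succ⟫ := by
        rw [← hsum, Fin.sum_univ_succ, hAvx]
      rw [htot]
      by_cases hx : x = 0
      · simpa [hx] using hS
      · have hxn : 0 < ‖x‖ := norm_pos_iff.mpr hx
        set x' := ‖x‖⁻¹ • x with hx'def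
        have hx'norm : ‖x'‖ = 1 := by
          rw [hx'def, norm_smul, norm_inv, norm_norm, inv_mul_cancel₀ hxn.ne']
        have hx'v : ⟪x', v⟫ = 0 := by
          rw [hx'def, real_inner_smul_left, hxv, mul_zero]
        have hx'w : ∀ i : Fin k, ⟪x', w i.succ⟫ = 0 := fun i => by
          rw [hx'def, real_inner_smul_left, hxw, mul_zero]
        have hAvxq : ⟪Av x, x⟫ = ‖x‖^2 * ⟪Av x', x'⟫ := by
          rw [hx'def, map_smul, real_inner_smul_left, real_inner_smul_right]
          field_simp
        have hrep : ∀ i : Fin k, 0 < ⟪Av x', x'⟫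
            + ((∑ j : Fin k, ⟪Av (w j.succ), w j.succ⟫) - ⟪Av (w i.succ), w i.succ⟫) := by
          intro i
          set g : Fin k → V := Function.update (fun j : Fin k => w j.succ) i x' with hgdef
          have honb : Orthonormal ℝ g := by
            rw [orthonormal_iff_ite]
            intro a b
            by_cases ha : a = i <;> by_cases hb : b = i
            · subst ha; subst hb
              simp [hgdef, real_inner_self_eq_norm_sq, hx'norm]
            · subst ha
              rw [if_neg (by exact fun hh => hb hh.symm)]
              rw [hgdef]
              simp only [Function.update_self, Function.update_of_ne hb]
              exact hx'w b
            · subst hb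
              rw [if_neg ha]
              rw [hgdef]
              simp only [Function.update_self, Function.update_of_ne ha]
              rw [real_inner_comm]; exact hx'w a
            · rw [hgdef]
              simp only [Function.update_of_ne ha, Function.update_of_ne hb]
              exact orthonormal_iff_ite.mp hw' a b
          have hperp : ∀ j, ⟪g j, v⟫ = 0 := by
            intro j
            by_cases hj : j = i
            · subst hj; rw [hgdef]; simp only [Function.update_self]; exact hx'v
            · rw [hgdef]; simp only [Function.update_of_ne hj]; exact hwvs j
          have hpos := h g honb hperp
          have hfun : (fun j => ⟪Av (g j), g j⟫)
              = Function.update (fun j : Fin k => ⟪Av (w j.succ), w j.succ⟫) i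
                  ⟪Av x', x'⟫ := by
            funext j
            by_cases hj : j = i
            · subst hj; rw [hgdef]; simp [Function.update_self]
            · rw [hgdef]; simp [Function.update_of_ne hj]
          rw [show ∑ j, ⟪Av (g j), g j⟫ = ∑ j, (Function.update
              (fun j : Fin k => ⟪Av (w j.succ), w j.succ⟫) i ⟪Av x', x'⟫) j from
            Finset.sum_congr rfl (fun j _ => congrFun hfun j)] at hpos
          rw [Finset.sum_update_of_mem (Finset.mem_univ i)] at hpos
          rw [Finset.sum_sdiff_eq_sub (Finset.singleton_subset_iff.mpr (Finset.mem_univ i)),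
            Finset.sum_singleton] at hpos
          linarith
        -- final arithmetic
        set S := ∑ i : Fin k, ⟪Av (w i.succ), w i.succ⟫
        set q := ⟪Av x', x'⟫
        have hkq : 0 < (k:ℝ) * q + ((k:ℝ) * S - S) := by
          have hnk : (Finset.univ : Finset (Fin k)).Nonempty := by
            have : NeZero k := ⟨by omega⟩
            exact Finset.univ_nonempty
          have := Finset.sum_pos (fun i (_ : i ∈ Finset.univ) => hrep i) hnk
          rw [Finset.sum_add_distrib, Finset.sum_const, Finset.sum_sub_distrib,
            Finset.sum_const, card_univ, Fintype.card_fin, nsmul_eq_mul, nsmul_eq_mul] at this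
          linarith
        have ht1 : ‖x‖^2 ≤ 1 := by nlinarith [sq_nonneg ‖c‖]
        have ht0 : (0:ℝ) < ‖x‖^2 := by positivity
        rw [hAvxq]
        rcases le_or_gt 0 q with hq | hq
        · nlinarith
        · have h1 : q + S > 0 := by nlinarith
          nlinarith
  · -- easy direction
    intro h w hw hwv
    have hu := cons_orthonormal' v hv hw hwv
    have := h _ hu
    rw [Fin.sum_univ_succ] at this
    simpa [hAvv] using this
end

section
/- Let λ₁₂ ≥ λ₁₃ ≥ λ₂₃ be reals and μ₁,μ₂,μ₃ reals with μ₁²+μ₂²+μ₃² = 1. Let T = μ₁²(λ₁₂+λ₁₃)+μ₂²(λ₁₂+λ₂₃)+μ₃²(λ₁₃+λ₂₃) and let D ≥ 0 be as in the discriminant identity, so that λ± = (T ± √D)/2. Then λ₊ ≥ μ₁²λ₁₂ + μ₂²λ₂₃ + μ₃²λ₂₃ and λ₋ ≥ μ₁²λ₁₃ + μ₂²λ₂₃ + μ₃²λ₂₃. -/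
/-- Lower bounds for the two nonzero eigenvalues `λ± = (T ± √D)/2` from the proof of
Proposition 2.4, assuming the ordering `λ₁₂ ≥ λ₁₃ ≥ λ₂₃`. -/
theorem eigenvalue_lower_bounds (l12 l13 l23 m1 m2 m3 : ℝ)
    (h1 : l13 ≤ l12) (h2 : l23 ≤ l13) (hm : m1^2 + m2^2 + m3^2 = 1) :
    m1^2*l12 + m2^2*l23 + m3^2*l23
      ≤ ((m1^2*(l12+l13) + m2^2*(l12+l23) + m3^2*(l13+l23))
          + Real.sqrt (m1^4*(l12-l13)^2 + m2^4*(l12-l23)^2 + m3^4*(l13-l23)^2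
            + 2*m1^2*m2^2*(l12-l13)*(l12-l23) + 2*m1^2*m3^2*(l13-l12)*(l13-l23)
            + 2*m2^2*m3^2*(l23-l13)*(l23-l12))) / 2
    ∧ m1^2*l13 + m2^2*l23 + m3^2*l23
      ≤ ((m1^2*(l12+l13) + m2^2*(l12+l23) + m3^2*(l13+l23))
          - Real.sqrt (m1^4*(l12-l13)^2 + m2^4*(l12-l23)^2 + m3^4*(l13-l23)^2
            + 2*m1^2*m2^2*(l12-l13)*(l12-l23) + 2*m1^2*m3^2*(l13-l12)*(l13-l23)
            + 2*m2^2*m3^2*(l23-l13)*(l23-l12))) / 2 := by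
  set D : ℝ := m1^4*(l12-l13)^2 + m2^4*(l12-l23)^2 + m3^4*(l13-l23)^2
            + 2*m1^2*m2^2*(l12-l13)*(l12-l23) + 2*m1^2*m3^2*(l13-l12)*(l13-l23)
            + 2*m2^2*m3^2*(l23-l13)*(l23-l12) with hD
  set E : ℝ := m1^2*(l12-l13) - m2^2*(l12-l23) - m3^2*(l13-l23) with hE
  set F : ℝ := m1^2*(l12-l13) + m2^2*(l12-l23) + m3^2*(l13-l23) with hF
  have ha : (0:ℝ) ≤ l12 - l13 := by linarith
  have hb : (0:ℝ) ≤ l13 - l23 := by linarith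
  have hab : (0:ℝ) ≤ l12 - l23 := by linarith
  have hE2 : E^2 ≤ D := by
    have key : D - E^2 = 4 * (m1*m2)^2 * ((l12-l13) * (l12-l23)) := by
      rw [hD, hE]; ring
    nlinarith [sq_nonneg (m1*m2), mul_nonneg ha hab,
      mul_nonneg (sq_nonneg (m1*m2)) (mul_nonneg ha hab)]
  have hF0 : 0 ≤ F := by
    have := mul_nonneg (sq_nonneg m1) ha
    have := mul_nonneg (sq_nonneg m2) hab
    have := mul_nonneg (sq_nonneg m3) hb
    rw [hF]; nlinarith
  have hDF : D ≤ F^2 := by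
    have key : F^2 - D = 4 * (m1*m3)^2 * ((l12-l13) * (l13-l23)) := by
      rw [hD, hF]; ring
    nlinarith [mul_nonneg (sq_nonneg (m1*m3)) (mul_nonneg ha hb)]
  have h1' : E ≤ Real.sqrt D := by
    calc E ≤ |E| := le_abs_self E
    _ = Real.sqrt (E^2) := (Real.sqrt_sq_eq_abs E).symm
    _ ≤ Real.sqrt D := Real.sqrt_le_sqrt hE2
  have h2' : Real.sqrt D ≤ F := by
    calc Real.sqrt D ≤ Real.sqrt (F^2) := Real.sqrt_le_sqrt hDF
    _ = |F| := Real.sqrt_sq_eq_abs F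
    _ = F := abs_of_nonneg hF0
  constructor
  · have key : 2*(m1^2*l12 + m2^2*l23 + m3^2*l23)
        - (m1^2*(l12+l13) + m2^2*(l12+l23) + m3^2*(l13+l23)) = E := by rw [hE]; ring
    linarith
  · have key : (m1^2*(l12+l13) + m2^2*(l12+l23) + m3^2*(l13+l23))
        - 2*(m1^2*l13 + m2^2*l23 + m3^2*l23) = F := by rw [hF]; ring
    linarith
end

section
/- Let p ≥ 1, q ≥ 2, and k ≤ p + q be natural numbers, and let H'', F'', H', F', Hq, Fq (representing h''/h, f''/f, (1−h'²)/h², (1−f'²)/f², f'h'/(fh) at a fixed point) be real numbers with H'' < 0, F'' ≥ 0, H' > 0, F' > 0, Fq ≥ 0, satisfying: (1) −(k−q)H'' − qF'' > 0; (2) −H'' + (k−q−1)H' − qFq > 0; (3) (k−q)H' − qFq > 0; (4) −F'' − pFq + (k−p−1)F' > 0. Then for every choice of i ∈ {1,2,3} and nonnegative integers n₁ ≤ d₁ⁱ, n₂ ≤ d₂ⁱ, n₃ ≤ d₃ⁱ with n₁+n₂+n₃ = k (where (d₁ⁱ,d₂ⁱ,d₃ⁱ) equals (0,p,q), (1,p−1,q),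 (1,p,q−1) for i = 1,2,3 respectively), the corresponding combination is positive: for i=1: −n₂H'' − n₃F'' > 0; for i=2: −n₁H'' + n₂H' − n₃Fq > 0; for i=3: −n₁F'' − n₂Fq + n₃F' > 0. -/
/-- Algebraic core of the sufficiency direction of Corollary 2.8: the four inequalities
(1)–(4) imply positivity of all the eigenvalue combinations required by
Proposition 2.4 for the curvature operator of a doubly warped product.
Here `Hpp, Fpp, Hp, Fp, Fq` stand for `h''/h`, `f''/f`, `(1−h'²)/h²`, `(1−f'²)/f²`,
`f'h'/(fh)` at a fixed point. -/
theorem warped_product_eigenvalue_sums (p q k : ℕ) (hp : 1 ≤ p) (hq : 2 ≤ q)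
    (hk : k ≤ p + q)
    (Hpp Fpp Hp Fp Fq : ℝ)
    (hHpp : Hpp < 0) (hFpp : 0 ≤ Fpp) (hHp : 0 < Hp) (hFp : 0 < Fp) (hFq : 0 ≤ Fq)
    (h1 : 0 < -((k : ℝ) - q) * Hpp - q * Fpp)
    (h2 : 0 < -Hpp + ((k : ℝ) - q - 1) * Hp - q * Fq)
    (h3 : 0 < ((k : ℝ) - q) * Hp - q * Fq)
    (h4 : 0 < -Fpp - p * Fq + ((k : ℝ) - p - 1) * Fp) :
    (∀ n2 n3 : ℕ, n2 ≤ p → n3 ≤ q → n2 + n3 = k →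
      0 < -(n2 : ℝ) * Hpp - n3 * Fpp)
    ∧ (∀ n1 n2 n3 : ℕ, n1 ≤ 1 → n2 ≤ p - 1 → n3 ≤ q → n1 + n2 + n3 = k →
      0 < -(n1 : ℝ) * Hpp + n2 * Hp - n3 * Fq)
    ∧ (∀ n1 n2 n3 : ℕ, n1 ≤ 1 → n2 ≤ p → n3 ≤ q - 1 → n1 + n2 + n3 = k →
      0 < -(n1 : ℝ) * Fpp - n2 * Fq + n3 * Fp) := by
  refine ⟨?_, ?_, ?_⟩
  · intro n2 n3 hn2 hn3 hs
    have hn2' : (n2:ℝ) ≤ p := by exact_mod_cast hn2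
    have hn3' : (n3:ℝ) ≤ q := by exact_mod_cast hn3
    have hs' : (n2:ℝ) + n3 = k := by exact_mod_cast (show n2 + n3 = k by omega)
    have t1 : 0 ≤ ((n2:ℝ) - ((k:ℝ) - q)) * (-Hpp) :=
      mul_nonneg (by linarith) (by linarith)
    have t2 : 0 ≤ ((q:ℝ) - n3) * Fpp := mul_nonneg (by linarith) hFpp
    nlinarith [t1, t2]
  · intro n1 n2 n3 hn1 hn2 hn3 hs
    have hn3' : (n3:ℝ) ≤ q := by exact_mod_cast hn3
    interval_cases n1
    · have hs' : (n2:ℝ) + n3 = k := by exact_mod_cast (show n2 + n3 = k by omega)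
      have t1 : 0 ≤ ((n2:ℝ) - ((k:ℝ) - q)) * Hp :=
        mul_nonneg (by linarith) hHp.le
      have t2 : 0 ≤ ((q:ℝ) - n3) * Fq := mul_nonneg (by linarith) hFq
      push_cast
      nlinarith [t1, t2]
    · have hs' : 1 + (n2:ℝ) + n3 = k := by exact_mod_cast hs
      have t1 : 0 ≤ ((n2:ℝ) - ((k:ℝ) - q - 1)) * Hp :=
        mul_nonneg (by linarith) hHp.le
      have t2 : 0 ≤ ((q:ℝ) - n3) * Fq := mul_nonneg (by linarith) hFq
      push_cast
      nlinarith [t1, t2]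
  · intro n1 n2 n3 hn1 hn2 hn3 hs
    have hn1' : (n1:ℝ) ≤ 1 := by exact_mod_cast hn1
    have hn2' : (n2:ℝ) ≤ p := by exact_mod_cast hn2
    have hn3a : n3 + 1 ≤ q := by omega
    have hn3' : (n3:ℝ) + 1 ≤ q := by exact_mod_cast hn3a
    have hs' : (n1:ℝ) + n2 + n3 = k := by exact_mod_cast hs
    have hn1'' : (0:ℝ) ≤ n1 := n1.cast_nonneg
    have t0 : 0 ≤ (1 - (n1:ℝ)) * Fpp := mul_nonneg (by linarith) hFpp
    have t1 : 0 ≤ ((n3:ℝ) - ((k:ℝ) - p - 1)) * Fp :=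
      mul_nonneg (by linarith) hFp.le
    have t2 : 0 ≤ ((p:ℝ) - n2) * Fq := mul_nonneg (by linarith) hFq
    nlinarith [t0, t1, t2]
end

section
/- Let V = V₁ ⊕ V₂ ⊕ V₃ be an orthogonal decomposition of a finite-dimensional real inner product space, A : Λ²V → Λ²V self-adjoint with each Vᵢ∧Vⱼ an eigenspace with eigenvalue λᵢⱼ. Let v = μ₁v₁ + μ₂v₂ + μ₃v₃ with vᵢ ∈ Vᵢ unit vectors and μ₁²+μ₂²+μ₃² = 1. If w ∈ Vᵢ is a unit vector orthogonal to vᵢ, then w is an eigenvector of the map A_v (defined by ⟨A_v(x),y⟩ = ⟨A(v∧x),v∧y⟩) with eigenvalue aᵢ = μ₁²λᵢ₁ + μ₂²λᵢ₂ + μ₃²λᵢ₃. -/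
open scoped RealInnerProductSpace

/-- In the setting of Proposition 2.4: if `v = μ₁v₁ + μ₂v₂ + μ₃v₃` with `vᵢ ∈ Vᵢ` unit
vectors and `μ₁²+μ₂²+μ₃² = 1`, then any unit vector `w ∈ Vᵢ` orthogonal to `vᵢ` is an
eigenvector of `A_v` with eigenvalue `aᵢ = μ₁²λᵢ₁ + μ₂²λᵢ₂ + μ₃²λᵢ₃`. -/
theorem Av_eigenvector_in_Vi {V W : Type*}
    [NormedAddCommGroup V] [InnerProductSpace ℝ V] [FiniteDimensional ℝ V]
    [NormedAddCommGroup W] [InnerProductSpace ℝ W]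
    (wedge : V →ₗ[ℝ] V →ₗ[ℝ] W)
    (hinner : ∀ a b c d : V, ⟪wedge a b, wedge c d⟫
      = ⟪a, c⟫ * ⟪b, d⟫ - ⟪a, d⟫ * ⟪b, c⟫)
    (hspan : Submodule.span ℝ {x : W | ∃ a b : V, wedge a b = x} = ⊤)
    (A : W →ₗ[ℝ] W) (hA : A.IsSymmetric)
    (Vsub : Fin 3 → Submodule ℝ V)
    (horth : ∀ i j : Fin 3, i ≠ j → ∀ x ∈ Vsub i, ∀ y ∈ Vsub j, ⟪x, y⟫ = 0)
    (hsup : Vsub 0 ⊔ Vsub 1 ⊔ Vsub 2 = ⊤)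
    (lam : Fin 3 → Fin 3 → ℝ) (hlam : ∀ i j, lam i j = lam j i)
    (heigen : ∀ i j : Fin 3, ∀ x ∈ Vsub i, ∀ y ∈ Vsub j,
      A (wedge x y) = lam i j • wedge x y)
    (mu : Fin 3 → ℝ) (hmu : mu 0 ^ 2 + mu 1 ^ 2 + mu 2 ^ 2 = 1)
    (vv : Fin 3 → V) (hvv : ∀ i, vv i ∈ Vsub i) (hvvnorm : ∀ i, ‖vv i‖ = 1)
    (v : V) (hv : v = mu 0 • vv 0 + mu 1 • vv 1 + mu 2 • vv 2)
    (Av : V →ₗ[ℝ] V)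
    (hAv : ∀ x y : V, ⟪Av x, y⟫ = ⟪A (wedge v x), wedge v y⟫)
    (i : Fin 3) (w : V) (hw : w ∈ Vsub i) (hwnorm : ‖w‖ = 1)
    (hworth : ⟪w, vv i⟫ = 0) :
    Av w = (mu 0 ^ 2 * lam i 0 + mu 1 ^ 2 * lam i 1 + mu 2 ^ 2 * lam i 2) • w := by
  set a := mu 0 ^ 2 * lam i 0 + mu 1 ^ 2 * lam i 1 + mu 2 ^ 2 * lam i 2 with ha
  have hvvin : ∀ j k : Fin 3, ⟪vv j, vv k⟫ = if j = k then 1 else 0 := by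
    intro j k
    by_cases h : j = k
    · subst h
      simp [real_inner_self_eq_norm_sq, hvvnorm]
    · simp only [h, if_false]
      exact horth j k h _ (hvv j) _ (hvv k)
  have hwv : ∀ k : Fin 3, ⟪w, vv k⟫ = 0 := by
    intro k
    by_cases h : i = k
    · subst h; exact hworth
    · exact horth i k h _ hw _ (hvv k)
  have key : ∀ y : V, ⟪Av w - a • w, y⟫ = 0 := by
    intro y
    rw [inner_sub_left, hAv, hv, real_inner_smul_left]
    have expand : ∀ z : V, wedge (mu 0 • vv 0 + mu 1 • vv 1 + mu 2 • vv 2) z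
        = mu 0 • wedge (vv 0) z + mu 1 • wedge (vv 1) z + mu 2 • wedge (vv 2) z := by
      intro z; simp [map_add, map_smul]
    rw [expand w, expand y]
    have hAeig : ∀ j : Fin 3, A (wedge (vv j) w) = lam j i • wedge (vv j) w :=
      fun j => heigen j i _ (hvv j) _ hw
    simp only [map_add, map_smul, hAeig, smul_smul, inner_add_left, inner_add_right,
      real_inner_smul_left, real_inner_smul_right, hinner, hvvin, hwv]
    simp only [ha, hlam i 0, hlam i 1, hlam i 2]
    simp only [if_neg (show (2:Fin 3) ≠ 0 by decide), if_neg (show (2:Fin 3) ≠ 1 by decide),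
      if_neg (show (0:Fin 3) ≠ 2 by decide), if_neg (show (1:Fin 3) ≠ 2 by decide),
      if_neg (show (0:Fin 3) ≠ 1 by decide), if_neg (show (1:Fin 3) ≠ 0 by decide),
      if_pos trivial]
    ring
  have h0 := key (Av w - a • w)
  rw [inner_self_eq_zero, sub_eq_zero] at h0
  exact h0
end
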